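/- arXiv:2303.07887 — 3 statements merged into one kernel-verified Lean document; each statement's English description precedes it below -/
import Mathlib

section
/- The series ∑_{k=0}^∞ (1/16)^k · ((1)_k)²/((3/2)_k)² · (19 + 30k)/((1+k)(1+2k)) equals 16·ζ(3). -/
open scoped BigOperators

noncomputable def poch (x : ℝ) (k : ℕ) : ℝ := (ascPochhammer ℝ k).eval x

noncomputable def H (n : ℕ) : ℝ := ∑ j ∈ Finset.range n, (1 : ℝ) / ((j : ℝ) + 1)

noncomputable def H2 (n : ℕ) : ℝ := ∑ j ∈ Finset.range n, (1 : ℝ) / ((j : ℝ) + 1) ^ 2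

noncomputable def zeta (s : ℕ) : ℝ := ∑' n : ℕ, (1 : ℝ) / ((n : ℝ) + 1) ^ s

/- ## Auxiliary development: a Markov–WZ style proof.
With `n = a+1`, set
`Hh a k = 16 ((n-1)!)² (k!)⁴ / ((n+k) ((n+2k)!)²)` and
`Gg a k = ((n-1)!)² (k!)⁴ R(n,k) / ((n+k)(2k+1)(n+2k+1)² ((n+2k)!)²)`,
where `R(n,k) = 8n³+24n²+28n+16+(56n²+124n+92)k+(136n+180)k²+120k³`.
Then `Hh a (k+1) - Hh a k = Gg (a+1) k - Gg a k`, `Hh a 0 = 16/(a+1)³`,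
and `Gg 0 k` is the summand of our series. -/

noncomputable def fc (m : ℕ) : ℝ := (Nat.factorial m : ℝ)

lemma fc_pos (m : ℕ) : 0 < fc m := by
  unfold fc; exact_mod_cast Nat.factorial_pos m

lemma fc_succ (m : ℕ) : fc (m + 1) = ((m : ℝ) + 1) * fc m := by
  unfold fc; rw [Nat.factorial_succ]; push_cast; ring

lemma fc_zero : fc 0 = 1 := by simp [fc]

noncomputable def Rp (x y : ℝ) : ℝ :=
  8*x^3 + 24*x^2 + 28*x + 16 + (56*x^2 + 124*x + 92)*y + (136*x + 180)*y^2 + 120*y^3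

noncomputable def Hh (a k : ℕ) : ℝ :=
  16 * fc a ^ 2 * fc k ^ 4 / (((a : ℝ) + (k : ℝ) + 1) * fc (a + 1 + 2*k) ^ 2)

noncomputable def Gg (a k : ℕ) : ℝ :=
  fc a ^ 2 * fc k ^ 4 * Rp ((a : ℝ) + 1) (k : ℝ) /
    (((a : ℝ) + (k : ℝ) + 1) * (2*(k : ℝ) + 1) * ((a : ℝ) + 2*(k : ℝ) + 2) ^ 2
       * fc (a + 1 + 2*k) ^ 2)

lemma wz (a k : ℕ) : Hh a (k+1) - Hh a k = Gg (a+1) k - Gg a k := by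
  have hx : (0:ℝ) ≤ (a:ℝ) := Nat.cast_nonneg a
  have hy : (0:ℝ) ≤ (k:ℝ) := Nat.cast_nonneg k
  have hM := fc_pos (a + 1 + 2*k)
  have hF := fc_pos a
  have hK := fc_pos k
  have e1 : fc (a + 1 + 2*(k+1))
      = ((a:ℝ) + 2*(k:ℝ) + 3) * (((a:ℝ) + 2*(k:ℝ) + 2) * fc (a + 1 + 2*k)) := by
    have h : a + 1 + 2*(k+1) = (a + 1 + 2*k) + 1 + 1 := by omega
    rw [h, fc_succ, fc_succ]; push_cast; ring
  have e2 : fc ((a+1) + 1 + 2*k) = ((a:ℝ) + 2*(k:ℝ) + 2) * fc (a + 1 + 2*k) := by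
    have h : (a+1) + 1 + 2*k = (a + 1 + 2*k) + 1 := by omega
    rw [h, fc_succ]; push_cast; ring
  have e3 : fc (k+1) = ((k:ℝ) + 1) * fc k := by rw [fc_succ]
  have e4 : fc (a+1) = ((a:ℝ) + 1) * fc a := by rw [fc_succ]
  unfold Hh Gg
  rw [e1, e2, e3, e4]
  push_cast
  have d1 : (a:ℝ) + (k:ℝ) + 1 ≠ 0 := by positivity
  have d2 : (a:ℝ) + ((k:ℝ)+1) + 1 ≠ 0 := by positivity
  have d3 : (a:ℝ) + 1 + (k:ℝ) + 1 ≠ 0 := by positivity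
  have d4 : 2*(k:ℝ) + 1 ≠ 0 := by positivity
  have d5 : (a:ℝ) + 2*(k:ℝ) + 2 ≠ 0 := by positivity
  have d6 : (a:ℝ) + 2*(k:ℝ) + 3 ≠ 0 := by positivity
  have d7 : (a:ℝ) + 1 + 2*(k:ℝ) + 2 ≠ 0 := by positivity
  have d8 : fc (a + 1 + 2*k) ≠ 0 := ne_of_gt hM
  simp only [Rp]
  field_simp
  ring

lemma Hh_zero (a : ℕ) : Hh a 0 = 16 / ((a:ℝ) + 1)^3 := by
  have hF := fc_pos a
  have e : fc (a + 1 + 2*0) = ((a:ℝ) + 1) * fc a := by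
    have h : a + 1 + 2*0 = a + 1 := by omega
    rw [h, fc_succ]
  unfold Hh
  rw [e, fc_zero]
  have d1 : (a:ℝ) + 1 ≠ 0 := by positivity
  have d8 : fc a ≠ 0 := ne_of_gt hF
  push_cast
  field_simp
  ring

lemma Gg_zero (k : ℕ) : Gg 0 k
    = fc k ^ 4 * (30*(k:ℝ) + 19) / (((k:ℝ) + 1) * (2*(k:ℝ) + 1) * fc (2*k + 1) ^ 2) := by
  have hM := fc_pos (2*k + 1)
  have e : (0 : ℕ) + 1 + 2*k = 2*k + 1 := by omega
  unfold Gg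
  rw [e]
  have d1 : (k:ℝ) + 1 ≠ 0 := by positivity
  have d4 : 2*(k:ℝ) + 1 ≠ 0 := by positivity
  have d8 : fc (2*k + 1) ≠ 0 := ne_of_gt hM
  simp only [Rp]
  rw [fc_zero]
  push_cast
  field_simp
  ring

/-- `(a+1)! * k! * k! * (k+1) ≤ (a+1+2k)!` over ℕ. -/
lemma nat_key (a k : ℕ) :
    (a+1).factorial * (k.factorial * k.factorial * (k+1)) ≤ (a + 1 + 2*k).factorial := by
  have h1 : (a+1).factorial * (2*k).factorial ≤ (a + 1 + 2*k).factorial := by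
    have := Nat.factorial_mul_factorial_dvd_factorial_add (a+1) (2*k)
    exact Nat.le_of_dvd (Nat.factorial_pos _) this
  have h2 : ∀ m : ℕ, m.factorial * m.factorial * (m+1) ≤ (2*m).factorial := by
    intro m
    induction m with
    | zero => simp
    | succ n ih =>
      have e : 2*(n+1) = 2*n + 1 + 1 := by omega
      rw [e, Nat.factorial_succ, Nat.factorial_succ]
      calc (n+1).factorial * (n+1).factorial * (n+1+1)
          = (n.factorial * n.factorial * (n+1)) * ((n+1) * (n+2)) := by
            rw [Nat.factorial_succ]; ring
        _ ≤ (2*n).factorial * ((2*n+1) * (2*n+1+1)) := by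
            have hle : (n+1) * (n+2) ≤ (2*n+1) * (2*n+1+1) :=
              Nat.mul_le_mul (by omega) (by omega)
            calc (n.factorial * n.factorial * (n+1)) * ((n+1) * (n+2))
                ≤ (2*n).factorial * ((n+1) * (n+2)) := Nat.mul_le_mul_right _ ih
              _ ≤ (2*n).factorial * ((2*n+1) * (2*n+1+1)) := Nat.mul_le_mul_left _ hle
        _ = (2*n+1+1) * ((2*n+1) * (2*n).factorial) := by ring
  calc (a+1).factorial * (k.factorial * k.factorial * (k+1))
      ≤ (a+1).factorial * (2*k).factorial := Nat.mul_le_mul_left _ (h2 k)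
    _ ≤ (a + 1 + 2*k).factorial := h1

lemma key_real (a k : ℕ) :
    ((a:ℝ) + 1) * fc a * (fc k * fc k * ((k:ℝ) + 1)) ≤ fc (a + 1 + 2*k) := by
  have := nat_key a k
  have h : (((a+1).factorial * (k.factorial * k.factorial * (k+1)) : ℕ) : ℝ)
      ≤ ((a + 1 + 2*k).factorial : ℝ) := by exact_mod_cast this
  calc ((a:ℝ) + 1) * fc a * (fc k * fc k * ((k:ℝ) + 1))
      = (((a+1).factorial * (k.factorial * k.factorial * (k+1)) : ℕ) : ℝ) := by
        unfold fc; push_cast [Nat.factorial_succ]; ring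
    _ ≤ fc (a + 1 + 2*k) := h

lemma Hh_nonneg (a k : ℕ) : 0 ≤ Hh a k := by
  unfold Hh
  have := fc_pos a; have := fc_pos k; have := fc_pos (a + 1 + 2*k)
  positivity

lemma Rp_nonneg (a k : ℕ) : 0 ≤ Rp ((a:ℝ) + 1) (k:ℝ) := by
  have hx : (0:ℝ) ≤ (a:ℝ) := Nat.cast_nonneg a
  have hy : (0:ℝ) ≤ (k:ℝ) := Nat.cast_nonneg k
  unfold Rp
  positivity

lemma Gg_nonneg (a k : ℕ) : 0 ≤ Gg a k := by
  unfold Gg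
  have h1 := fc_pos a; have h2 := fc_pos k; have h3 := fc_pos (a + 1 + 2*k)
  have h4 := Rp_nonneg a k
  have hx : (0:ℝ) ≤ (a:ℝ) := Nat.cast_nonneg a
  have hy : (0:ℝ) ≤ (k:ℝ) := Nat.cast_nonneg k
  positivity

lemma Bb_le (a k : ℕ) :
    fc a ^ 2 * fc k ^ 4 / fc (a + 1 + 2*k) ^ 2
      ≤ 1 / (((a:ℝ) + 1)^2 * ((k:ℝ) + 1)^2) := by
  have hM := fc_pos (a + 1 + 2*k)
  have hF := fc_pos a
  have hK := fc_pos k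
  have hx : (0:ℝ) ≤ (a:ℝ) := Nat.cast_nonneg a
  have hy : (0:ℝ) ≤ (k:ℝ) := Nat.cast_nonneg k
  rw [div_le_div_iff₀ (by positivity) (by positivity)]
  have hkey := key_real a k
  have hnn : (0:ℝ) ≤ ((a:ℝ) + 1) * fc a * (fc k * fc k * ((k:ℝ) + 1)) := by positivity
  calc fc a ^ 2 * fc k ^ 4 * (((a:ℝ) + 1)^2 * ((k:ℝ) + 1)^2)
      = (((a:ℝ) + 1) * fc a * (fc k * fc k * ((k:ℝ) + 1)))
        * (((a:ℝ) + 1) * fc a * (fc k * fc k * ((k:ℝ) + 1))) := by ring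
    _ ≤ fc (a + 1 + 2*k) * fc (a + 1 + 2*k) := mul_le_mul hkey hkey hnn (le_of_lt hM)
    _ = 1 * fc (a + 1 + 2*k) ^ 2 := by ring

lemma Hh_le (a k : ℕ) :
    Hh a k ≤ (16 / ((k:ℝ) + 1)^3) * (1 / ((a:ℝ) + 1)^2) := by
  have hM := fc_pos (a + 1 + 2*k)
  have hF := fc_pos a
  have hK := fc_pos k
  have hx : (0:ℝ) ≤ (a:ℝ) := Nat.cast_nonneg a
  have hy : (0:ℝ) ≤ (k:ℝ) := Nat.cast_nonneg k
  have h1 : Hh a k = 16 * (fc a ^ 2 * fc k ^ 4 / fc (a + 1 + 2*k) ^ 2)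
      * (1 / ((a:ℝ) + (k:ℝ) + 1)) := by
    unfold Hh; field_simp
  rw [h1]
  have hB := Bb_le a k
  have hBnn : 0 ≤ fc a ^ 2 * fc k ^ 4 / fc (a + 1 + 2*k) ^ 2 := by positivity
  have hc : 1 / ((a:ℝ) + (k:ℝ) + 1) ≤ 1 / ((k:ℝ) + 1) := by
    apply one_div_le_one_div_of_le (by positivity) (by linarith)
  have hcnn : 0 ≤ 1 / ((a:ℝ) + (k:ℝ) + 1) := by positivity
  calc 16 * (fc a ^ 2 * fc k ^ 4 / fc (a + 1 + 2*k) ^ 2) * (1 / ((a:ℝ) + (k:ℝ) + 1))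
      ≤ 16 * (1 / (((a:ℝ) + 1)^2 * ((k:ℝ) + 1)^2)) * (1 / ((k:ℝ) + 1)) := by
        apply mul_le_mul
        · exact mul_le_mul le_rfl hB hBnn (by norm_num)
        · exact hc
        · exact hcnn
        · positivity
    _ = (16 / ((k:ℝ) + 1)^3) * (1 / ((a:ℝ) + 1)^2) := by
        field_simp
  
lemma Gg_le (a k : ℕ) :
    Gg a k ≤ (30 / ((k:ℝ) + 1)^2) * (1 / ((a:ℝ) + 1)^2) := by
  have hM := fc_pos (a + 1 + 2*k)
  have hF := fc_pos a
  have hK := fc_pos k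
  have hx : (0:ℝ) ≤ (a:ℝ) := Nat.cast_nonneg a
  have hy : (0:ℝ) ≤ (k:ℝ) := Nat.cast_nonneg k
  have h1 : Gg a k = (fc a ^ 2 * fc k ^ 4 / fc (a + 1 + 2*k) ^ 2)
      * (Rp ((a:ℝ) + 1) (k:ℝ)
          / (((a:ℝ) + (k:ℝ) + 1) * (2*(k:ℝ) + 1) * ((a:ℝ) + 2*(k:ℝ) + 2) ^ 2)) := by
    unfold Gg; field_simp
  rw [h1]
  have hB := Bb_le a k
  have hBnn : 0 ≤ fc a ^ 2 * fc k ^ 4 / fc (a + 1 + 2*k) ^ 2 := by positivity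
  have hratio : Rp ((a:ℝ) + 1) (k:ℝ)
      / (((a:ℝ) + (k:ℝ) + 1) * (2*(k:ℝ) + 1) * ((a:ℝ) + 2*(k:ℝ) + 2) ^ 2) ≤ 30 := by
    rw [div_le_iff₀ (by positivity)]
    have hdiff : 30 * (((a:ℝ) + (k:ℝ) + 1) * (2*(k:ℝ) + 1) * ((a:ℝ) + 2*(k:ℝ) + 2) ^ 2)
        - Rp ((a:ℝ) + 1) (k:ℝ)
        = 44 + 328*(k:ℝ) + 764*(k:ℝ)^2 + 720*(k:ℝ)^3 + 240*(k:ℝ)^4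
          + (a:ℝ)*(140 + 724*(k:ℝ) + 1064*(k:ℝ)^2 + 480*(k:ℝ)^3)
          + (a:ℝ)^2*(102 + 394*(k:ℝ) + 300*(k:ℝ)^2)
          + (a:ℝ)^3*(22 + 60*(k:ℝ)) := by
      unfold Rp; ring
    nlinarith [mul_nonneg hx hy, mul_nonneg (mul_nonneg hx hx) hy,
      mul_nonneg hx (mul_nonneg hy hy), sq_nonneg ((a:ℝ)*(k:ℝ)),
      mul_nonneg (mul_nonneg hx (mul_nonneg hy hy)) hy,
      mul_nonneg (mul_nonneg hx hx) (mul_nonneg hy hy),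
      mul_nonneg hy (mul_nonneg hy (mul_nonneg hy hy)),
      mul_nonneg hx (mul_nonneg hx hx), mul_nonneg (mul_nonneg hx (mul_nonneg hx hx)) hy]
  have hrnn : 0 ≤ Rp ((a:ℝ) + 1) (k:ℝ)
      / (((a:ℝ) + (k:ℝ) + 1) * (2*(k:ℝ) + 1) * ((a:ℝ) + 2*(k:ℝ) + 2) ^ 2) := by
    have := Rp_nonneg a k
    positivity
  calc (fc a ^ 2 * fc k ^ 4 / fc (a + 1 + 2*k) ^ 2)
        * (Rp ((a:ℝ) + 1) (k:ℝ)
            / (((a:ℝ) + (k:ℝ) + 1) * (2*(k:ℝ) + 1) * ((a:ℝ) + 2*(k:ℝ) + 2) ^ 2))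
      ≤ (1 / (((a:ℝ) + 1)^2 * ((k:ℝ) + 1)^2)) * 30 :=
        mul_le_mul hB hratio hrnn (by positivity)
    _ = (30 / ((k:ℝ) + 1)^2) * (1 / ((a:ℝ) + 1)^2) := by
        field_simp

lemma summable_inv_sq : Summable (fun a : ℕ => 1 / ((a:ℝ) + 1)^2) := by
  have h : Summable (fun n : ℕ => 1 / (n:ℝ)^2) :=
    Real.summable_one_div_nat_pow.mpr (by norm_num)
  have h2 := (summable_nat_add_iff 1).mpr h
  refine h2.congr fun n => ?_
  push_cast
  ring_nf

lemma Hh_summable (k : ℕ) : Summable (fun a => Hh a k) := by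
  apply Summable.of_nonneg_of_le (fun a => Hh_nonneg a k) (fun a => Hh_le a k)
  exact (summable_inv_sq.mul_left _)

lemma Gg_summable (k : ℕ) : Summable (fun a => Gg a k) := by
  apply Summable.of_nonneg_of_le (fun a => Gg_nonneg a k) (fun a => Gg_le a k)
  exact (summable_inv_sq.mul_left _)

noncomputable def Sk (k : ℕ) : ℝ := ∑' a, Hh a k

lemma tsum_inv_sq_le : (∑' a : ℕ, 1 / ((a:ℝ) + 1)^2) ≤ 2 := by
  apply Real.tsum_le_of_sum_range_le (fun a => by positivity)
  intro n
  have h : ∀ m : ℕ, ∑ i ∈ Finset.range m, 1 / ((i:ℝ) + 1)^2 ≤ 2 - 2/((m:ℝ)+1) := by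
    intro m
    induction m with
    | zero => simp
    | succ p ih =>
      rw [Finset.sum_range_succ]
      have hp : (0:ℝ) < (p:ℝ) + 1 := by positivity
      have hp2 : (0:ℝ) < (p:ℝ) + 2 := by positivity
      have key : 1 / ((p:ℝ) + 1)^2 ≤ 2/((p:ℝ)+1) - 2/((p:ℝ)+2) := by
        rw [div_sub_div _ _ (ne_of_gt hp) (ne_of_gt hp2), div_le_div_iff₀ (by positivity) (by positivity)]
        nlinarith
      push_cast
      have : ((p:ℝ) + 1) + 1 = (p:ℝ) + 2 := by ring
      rw [this]
      linarith
  calc ∑ i ∈ Finset.range n, 1 / ((i:ℝ) + 1)^2 ≤ 2 - 2/((n:ℝ)+1) := h n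
    _ ≤ 2 := by
        have : (0:ℝ) < (n:ℝ) + 1 := by positivity
        have : 0 ≤ 2/((n:ℝ)+1) := by positivity
        linarith

lemma Sk_nonneg (k : ℕ) : 0 ≤ Sk k :=
  tsum_nonneg (fun a => Hh_nonneg a k)

lemma Sk_le (k : ℕ) : Sk k ≤ 32 * (1 / ((k:ℝ) + 1)) := by
  have h1 : Sk k ≤ ∑' a : ℕ, (16 / ((k:ℝ) + 1)^3) * (1 / ((a:ℝ) + 1)^2) := by
    apply Summable.tsum_le_tsum (fun a => Hh_le a k) (Hh_summable k)
    exact summable_inv_sq.mul_left _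
  rw [tsum_mul_left] at h1
  have h3 : (16 / ((k:ℝ) + 1)^3) * (∑' a : ℕ, 1 / ((a:ℝ) + 1)^2)
      ≤ (16 / ((k:ℝ) + 1)^3) * 2 := by
    apply mul_le_mul_of_nonneg_left tsum_inv_sq_le (by positivity)
  have hk0 : (0:ℝ) ≤ (k:ℝ) := Nat.cast_nonneg k
  have hk : (0:ℝ) < (k:ℝ) + 1 := by positivity
  have h5 : ((k:ℝ)+1) ≤ ((k:ℝ)+1)^3 := by
    nlinarith [mul_nonneg hk0 hk0, mul_nonneg (mul_nonneg hk0 hk0) hk0]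
  have h6 : 1 / ((k:ℝ)+1)^3 ≤ 1 / ((k:ℝ)+1) := one_div_le_one_div_of_le hk h5
  have h4 : (16 / ((k:ℝ) + 1)^3) * 2 ≤ 32 * (1 / ((k:ℝ) + 1)) := by
    have e1 : (16 / ((k:ℝ) + 1)^3) * 2 = 32 * (1 / ((k:ℝ)+1)^3) := by ring
    rw [e1]
    linarith
  linarith

lemma Sk_tendsto : Filter.Tendsto Sk Filter.atTop (nhds 0) := by
  apply squeeze_zero Sk_nonneg Sk_le
  have h := tendsto_one_div_add_atTop_nhds_zero_nat (𝕜 := ℝ)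
  have := h.const_mul (32:ℝ)
  simpa using this

lemma Sk_succ (k : ℕ) : Sk (k+1) = Sk k - Gg 0 k := by
  have hH1 := Hh_summable (k+1)
  have hHk := Hh_summable k
  have hG := Gg_summable k
  have hG' : Summable (fun a => Gg (a+1) k) := (summable_nat_add_iff 1).mpr hG
  have h1 : Sk (k+1) - Sk k = ∑' a, (Hh a (k+1) - Hh a k) := by
    rw [Summable.tsum_sub hH1 hHk]; rfl
  have h2 : (∑' a, (Hh a (k+1) - Hh a k)) = ∑' a, (Gg (a+1) k - Gg a k) :=
    tsum_congr (fun a => wz a k)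
  have h3 : (∑' a, (Gg (a+1) k - Gg a k)) = (∑' a, Gg (a+1) k) - ∑' a, Gg a k :=
    Summable.tsum_sub hG' hG
  have h4 : (∑' a, Gg a k) = Gg 0 k + ∑' a, Gg (a+1) k := Summable.tsum_eq_zero_add hG
  have : Sk (k+1) - Sk k = -Gg 0 k := by
    rw [h1, h2, h3]; linarith
  linarith

lemma sum_range_Gg (K : ℕ) : ∑ k ∈ Finset.range K, Gg 0 k = Sk 0 - Sk K := by
  induction K with
  | zero => simp
  | succ p ih =>
    rw [Finset.sum_range_succ, ih, Sk_succ]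
    ring

lemma Sk_zero : Sk 0 = 16 * zeta 3 := by
  unfold Sk zeta
  rw [tsum_congr Hh_zero]
  have : ∀ a : ℕ, (16:ℝ) / ((a:ℝ) + 1)^3 = 16 * (1 / ((a:ℝ) + 1)^3) := by
    intro a; ring
  rw [tsum_congr this, tsum_mul_left]

lemma Gg_hasSum : HasSum (fun k => Gg 0 k) (16 * zeta 3) := by
  rw [hasSum_iff_tendsto_nat_of_nonneg (fun k => Gg_nonneg 0 k)]
  have h : (fun n => ∑ i ∈ Finset.range n, Gg 0 i) = fun n => Sk 0 - Sk n := by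
    funext n; exact sum_range_Gg n
  rw [h, ← Sk_zero]
  have := Filter.Tendsto.const_sub (Sk 0) Sk_tendsto
  simpa using this

lemma poch_one (k : ℕ) : poch 1 k = fc k := by
  induction k with
  | zero => simp [poch, fc]
  | succ p ih =>
    unfold poch at *
    rw [ascPochhammer_succ_eval, ih, fc_succ]
    ring

lemma poch32_mul (k : ℕ) : poch (3/2) k * (4^k * fc k) = fc (2*k + 1) := by
  induction k with
  | zero => simp [poch, fc]
  | succ p ih =>
    unfold poch at *
    rw [ascPochhammer_succ_eval]
    have e : 2*(p+1) + 1 = (2*p + 1) + 1 + 1 := by omega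
    rw [e, fc_succ, fc_succ, fc_succ, pow_succ, ← ih]
    push_cast
    ring

lemma poch_three_halves (k : ℕ) : poch (3/2) k = fc (2*k + 1) / (4^k * fc k) := by
  have h := poch32_mul k
  have h1 : (4:ℝ)^k * fc k ≠ 0 := by
    have := fc_pos k; positivity
  rw [eq_div_iff h1]
  exact h

lemma term_eq (k : ℕ) :
    (1/16 : ℝ) ^ k * (poch 1 k) ^ 2 / (poch (3/2) k) ^ 2 *
      ((19 + 30 * (k : ℝ)) / ((1 + (k : ℝ)) * (1 + 2 * (k : ℝ)))) = Gg 0 k := by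
  rw [Gg_zero, poch_one, poch_three_halves]
  have h1 : fc k ≠ 0 := ne_of_gt (fc_pos k)
  have h2 : fc (2*k+1) ≠ 0 := ne_of_gt (fc_pos (2*k+1))
  have h3 : (4:ℝ)^k ≠ 0 := by positivity
  have h4 : ((k:ℝ) + 1) ≠ 0 := by positivity
  have h5 : (2*(k:ℝ) + 1) ≠ 0 := by positivity
  have h6 : (1 + (k:ℝ)) ≠ 0 := by positivity
  have h7 : (1 + 2*(k:ℝ)) ≠ 0 := by positivity
  have h16 : (1/16 : ℝ)^k = 1 / ((4:ℝ)^k * (4:ℝ)^k) := by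
    rw [← mul_pow]
    norm_num
    rw [← inv_pow]
    norm_num
  rw [h16]
  field_simp
  ring

theorem stmt2 :
    ∑' k : ℕ, (1/16 : ℝ) ^ k * (poch 1 k) ^ 2 / (poch (3/2) k) ^ 2 *
      ((19 + 30 * (k : ℝ)) / ((1 + (k : ℝ)) * (1 + 2 * (k : ℝ)))) = 16 * zeta 3 := by
  rw [tsum_congr term_eq]
  exact Gg_hasSum.tsum_eq
end

section
/- The series ∑_{k=1}^∞ H_k/k³ equals (5/4)·ζ(4), where H_k = ∑_{j=1}^k 1/j is the k-th harmonic number. -/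
open scoped BigOperators

noncomputable def a (n : ℕ) : ℝ := 1 / ((n:ℝ) + 1) ^ 2
noncomputable def c (n : ℕ) : ℝ := 1 / ((n:ℝ) + 1) ^ 3

lemma a_nonneg (n : ℕ) : 0 ≤ a n := by unfold a; positivity
lemma c_nonneg (n : ℕ) : 0 ≤ c n := by unfold c; positivity

lemma summable_a : Summable a := by
  have h := (summable_nat_add_iff (f := fun n : ℕ => 1 / (n:ℝ)^2) 1).2
    (Real.summable_one_div_nat_pow.2 (by norm_num))
  refine h.congr fun n => ?_
  simp [a]

lemma a_mono {m n : ℕ} (h : m ≤ n) : a n ≤ a m := by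
  unfold a
  have : (m:ℝ) ≤ n := by exact_mod_cast h
  gcongr

lemma H2_le (n : ℕ) : H2 n ≤ ∑' k, a k :=
  Summable.sum_le_tsum _ (fun i _ => a_nonneg i) summable_a

lemma H_le (n : ℕ) : H n ≤ n := by
  induction n with
  | zero => simp [H]
  | succ n ih =>
    have : H (n+1) = H n + 1/((n:ℝ)+1) := Finset.sum_range_succ _ n
    rw [this]
    push_cast
    have h1 : 1/((n:ℝ)+1) ≤ 1 := by
      rw [div_le_one (by positivity)]; linarith [Nat.cast_nonneg (α := ℝ) n]
    linarith

lemma pf_term {N m : ℕ} (h : m ≤ N) :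
    a m * a (N - m)
      = (a m + a (N - m)) / ((N:ℝ)+2)^2
        + 2 / ((N:ℝ)+2)^3 * (1/((m:ℝ)+1) + 1/(((N - m : ℕ):ℝ)+1)) := by
  have hc : ((N - m : ℕ):ℝ) = (N:ℝ) - m := by
    have := Nat.cast_sub (R := ℝ) h; exact this
  unfold a
  rw [hc]
  have hm : (m:ℝ) ≤ N := by exact_mod_cast h
  have h1 : ((m:ℝ)+1) ≠ 0 := by positivity
  have h2 : ((N:ℝ) - m + 1) ≠ 0 := by intro h0; nlinarith
  have h3 : ((N:ℝ)+2) ≠ 0 := by positivity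
  field_simp
  ring

lemma a_succ (N : ℕ) : a (N+1) = 1/((N:ℝ)+2)^2 := by unfold a; push_cast; ring_nf
lemma c_succ (N : ℕ) : c (N+1) = 1/((N:ℝ)+2)^3 := by unfold c; push_cast; ring_nf

lemma H2_eq (n : ℕ) : H2 n = ∑ j ∈ Finset.range n, a j := rfl
lemma H_eq (n : ℕ) : H n = ∑ j ∈ Finset.range n, 1/((j:ℝ)+1) := rfl

lemma antidiag_sq (N : ℕ) :
    ∑ kl ∈ Finset.HasAntidiagonal.antidiagonal N, a kl.1 * a kl.2
      = 2 * (H2 (N+1) * a (N+1)) + 4 * (H (N+1) * c (N+1)) := by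
  rw [Finset.Nat.sum_antidiagonal_eq_sum_range_succ (fun k l => a k * a l)]
  rw [Finset.sum_congr rfl
    (fun m hm => pf_term (Nat.lt_succ_iff.mp (Finset.mem_range.mp hm)))]
  rw [Finset.sum_add_distrib]
  have refl1 : ∑ m ∈ Finset.range (N+1), a (N - m) = H2 (N+1) := by
    rw [H2_eq]
    conv_rhs => rw [← Finset.sum_range_reflect]
    exact Finset.sum_congr rfl fun j _ => rfl
  have refl2 : ∑ m ∈ Finset.range (N+1), 1/(((N - m : ℕ):ℝ)+1) = H (N+1) := by
    rw [H_eq]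
    conv_rhs => rw [← Finset.sum_range_reflect]
    exact Finset.sum_congr rfl fun j _ => rfl
  have e1 : ∑ m ∈ Finset.range (N+1), (a m + a (N - m)) / ((N:ℝ)+2)^2
      = 2 * H2 (N+1) / ((N:ℝ)+2)^2 := by
    rw [← Finset.sum_div, Finset.sum_add_distrib, refl1, ← H2_eq]
    ring
  have e2 : ∑ m ∈ Finset.range (N+1),
        2 / ((N:ℝ)+2)^3 * (1/((m:ℝ)+1) + 1/(((N - m : ℕ):ℝ)+1))
      = 2 / ((N:ℝ)+2)^3 * (2 * H (N+1)) := by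
    rw [← Finset.mul_sum, Finset.sum_add_distrib, refl2, ← H_eq]
    ring
  rw [e1, e2, a_succ, c_succ]
  ring

lemma antidiag_sq2 (N : ℕ) :
    ∑ kl ∈ Finset.HasAntidiagonal.antidiagonal N, a kl.1 * a (kl.1 + kl.2 + 1)
      = H2 (N+1) * a (N+1) := by
  rw [Finset.Nat.sum_antidiagonal_eq_sum_range_succ_mk]
  rw [H2_eq, Finset.sum_mul]
  refine Finset.sum_congr rfl fun m hm => ?_
  have h : m ≤ N := Nat.lt_succ_iff.mp (Finset.mem_range.mp hm)
  congr 2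
  omega

lemma tsum_prod_antidiag (f : ℕ × ℕ → ℝ) (hf : Summable f) :
    ∑' p : ℕ × ℕ, f p = ∑' N, ∑ kl ∈ Finset.HasAntidiagonal.antidiagonal N, f kl := by
  conv_rhs => congr; ext; rw [← Finset.sum_finset_coe, ← tsum_fintype (L := .unconditional _)]
  rw [← Finset.HasAntidiagonal.sigmaAntidiagonalEquivProd.tsum_eq f]
  exact Summable.tsum_sigma' (fun n => (hasSum_fintype _).summable)
    (Finset.HasAntidiagonal.sigmaAntidiagonalEquivProd.summable_iff.2 hf)

lemma sG : Summable (fun p : ℕ × ℕ => a p.1 * a p.2) :=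
  summable_a.mul_of_nonneg summable_a a_nonneg a_nonneg

lemma sG2 : Summable (fun p : ℕ × ℕ => a p.1 * a (p.1 + p.2 + 1)) := by
  refine sG.of_nonneg_of_le (fun p => mul_nonneg (a_nonneg _) (a_nonneg _)) fun p => ?_
  exact mul_le_mul_of_nonneg_left (a_mono (by omega)) (a_nonneg _)

lemma sA1 : Summable (fun n : ℕ => a (n+1)) := (summable_nat_add_iff 1).2 summable_a

lemma sQ : Summable (fun n : ℕ => a n * a n) :=
  summable_a.of_nonneg_of_le (fun n => mul_nonneg (a_nonneg _) (a_nonneg _))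
    (fun n => by
      have := a_nonneg n
      have h1 := a_mono (Nat.zero_le n)
      have h0 : a 0 = 1 := by norm_num [a]
      nlinarith)

lemma sAH2 : Summable (fun m : ℕ => a m * H2 (m+1)) := by
  refine ((summable_a.mul_right (∑' k, a k)).of_nonneg_of_le
    (fun m => mul_nonneg (a_nonneg m) ?_) fun m => ?_)
  · exact Finset.sum_nonneg fun j _ => by positivity
  · exact mul_le_mul_of_nonneg_left (H2_le (m+1)) (a_nonneg m)

lemma sAH2' : Summable (fun m : ℕ => a m * H2 m) := by
  refine ((summable_a.mul_right (∑' k, a k)).of_nonneg_of_le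
    (fun m => mul_nonneg (a_nonneg m) ?_) fun m => ?_)
  · exact Finset.sum_nonneg fun j _ => by positivity
  · exact mul_le_mul_of_nonneg_left (H2_le m) (a_nonneg m)

lemma H_nonneg (n : ℕ) : 0 ≤ H n := Finset.sum_nonneg fun j _ => by positivity

lemma HC_le (n : ℕ) : H (n+1) * c (n+1) ≤ a (n+1) := by
  have h1 : H (n+1) ≤ (n:ℝ)+1 := by
    have := H_le (n+1); push_cast at this; linarith
  rw [a_succ, c_succ]
  have h2 : (0:ℝ) < (n:ℝ)+2 := by positivity
  rw [div_eq_mul_inv, div_eq_mul_inv, one_mul, one_mul]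
  rw [show ((n:ℝ)+2)^3 = ((n:ℝ)+2)^2 * ((n:ℝ)+2) by ring]
  rw [mul_inv]
  rw [← mul_assoc]
  calc H (n+1) * (((n:ℝ)+2)^2)⁻¹ * ((n:ℝ)+2)⁻¹
      ≤ ((n:ℝ)+2) * ((((n:ℝ)+2)^2)⁻¹ * ((n:ℝ)+2)⁻¹) := by
        rw [mul_assoc]
        exact mul_le_mul_of_nonneg_right (by linarith)
          (by positivity)
    _ = (((n:ℝ)+2)^2)⁻¹ := by field_simp
  
lemma sT3 : Summable (fun N : ℕ => H (N+1) * c (N+1)) :=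
  sA1.of_nonneg_of_le (fun N => mul_nonneg (H_nonneg _) (c_nonneg _)) HC_le

lemma sT2 : Summable (fun N : ℕ => H2 (N+1) * a (N+1)) := by
  refine (sA1.mul_left (∑' k, a k)).of_nonneg_of_le
    (fun N => mul_nonneg (Finset.sum_nonneg fun j _ => by positivity) (a_nonneg _))
    fun N => ?_
  exact mul_le_mul_of_nonneg_right (H2_le (N+1)) (a_nonneg _)

lemma keyI : (∑' k, a k) * (∑' k, a k)
    = 2 * (∑' N, H2 (N+1) * a (N+1)) + 4 * (∑' N, H (N+1) * c (N+1)) := by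
  rw [Summable.tsum_mul_tsum_eq_tsum_sum_antidiagonal summable_a summable_a sG]
  rw [tsum_congr antidiag_sq]
  rw [Summable.tsum_add (sT2.mul_left 2) (sT3.mul_left 4), tsum_mul_left, tsum_mul_left]

lemma keyII : ∑' N, H2 (N+1) * a (N+1)
    = (∑' k, a k) * (∑' k, a k)
      - ((∑' N, H2 (N+1) * a (N+1)) + ∑' n, a n * a n) := by
  have hA : ∑' N, H2 (N+1) * a (N+1) = ∑' p : ℕ × ℕ, a p.1 * a (p.1 + p.2 + 1) := by
    rw [tsum_prod_antidiag _ sG2]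
    exact (tsum_congr antidiag_sq2).symm
  have hB : ∑' p : ℕ × ℕ, a p.1 * a (p.1 + p.2 + 1)
      = (∑' k, a k) * (∑' k, a k) - ∑' m, a m * H2 (m+1) := by
    rw [Summable.tsum_prod sG2]
    have inner : ∀ m, ∑' d, a m * a (m + d + 1) = a m * ((∑' k, a k) - H2 (m+1)) := by
      intro m
      rw [tsum_mul_left]
      congr 1
      have h := Summable.sum_add_tsum_nat_add (f := a) (m+1) summable_a
      have h2 : ∑' d, a (m + d + 1) = ∑' d, a (d + (m+1)) :=
        tsum_congr fun d => by congr 1; omega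
      rw [h2, H2_eq]
      linarith
    rw [tsum_congr inner]
    have e : ∀ m, a m * ((∑' k, a k) - H2 (m+1))
        = a m * (∑' k, a k) - a m * H2 (m+1) := fun m => by ring
    rw [tsum_congr e, Summable.tsum_sub (summable_a.mul_right _) sAH2, tsum_mul_right]
  have hC : ∑' m, a m * H2 (m+1)
      = (∑' N, H2 (N+1) * a (N+1)) + ∑' n, a n * a n := by
    have e : ∀ m, a m * H2 (m+1) = a m * H2 m + a m * a m := by
      intro m
      rw [show H2 (m+1) = H2 m + a m from Finset.sum_range_succ _ m]
      ring
    rw [tsum_congr e, Summable.tsum_add sAH2' sQ]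
    congr 1
    rw [Summable.tsum_eq_zero_add sAH2']
    have h0 : a 0 * H2 0 = 0 := by simp [H2]
    rw [h0, zero_add]
    exact tsum_congr fun n => mul_comm _ _
  linarith [hA, hB, hC]

lemma T3_val : ∑' N, H (N+1) * c (N+1) = (∑' n, a n * a n) / 4 := by
  have h1 := keyI
  have h2 := keyII
  linarith

lemma HCk_le (k : ℕ) : H (k+1) * c k ≤ a k := by
  have h1 : H (k+1) ≤ (k:ℝ)+1 := by
    have := H_le (k+1); push_cast at this; linarith
  unfold a c
  rw [div_eq_mul_inv, div_eq_mul_inv, one_mul, one_mul]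
  rw [show ((k:ℝ)+1)^3 = ((k:ℝ)+1)^2 * ((k:ℝ)+1) by ring, mul_inv, ← mul_assoc]
  calc H (k+1) * (((k:ℝ)+1)^2)⁻¹ * ((k:ℝ)+1)⁻¹
      ≤ ((k:ℝ)+1) * (((k:ℝ)+1)^2)⁻¹ * ((k:ℝ)+1)⁻¹ := by
        have : (0:ℝ) ≤ (((k:ℝ)+1)^2)⁻¹ * ((k:ℝ)+1)⁻¹ := by positivity
        nlinarith [mul_le_mul_of_nonneg_right h1 this]
    _ = (((k:ℝ)+1)^2)⁻¹ := by field_simp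


theorem stmt3 :
    ∑' k : ℕ, H (k + 1) / ((k : ℝ) + 1) ^ 3 = 5/4 * zeta 4 := by
  have hz : zeta 4 = ∑' n, a n * a n := by
    unfold zeta
    refine tsum_congr fun n => ?_
    have hx : ((n:ℝ)+1) ≠ 0 := by positivity
    unfold a
    field_simp
  have hS : (∑' k : ℕ, H (k + 1) / ((k : ℝ) + 1) ^ 3) = ∑' k, H (k+1) * c k :=
    tsum_congr fun k => by unfold c; ring
  have sS : Summable (fun k => H (k+1) * c k) :=
    summable_a.of_nonneg_of_le (fun k => mul_nonneg (H_nonneg _) (c_nonneg _)) HCk_le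
  have sQ1 : Summable (fun n : ℕ => a (n+1) * a (n+1)) :=
    (summable_nat_add_iff 1).2 sQ
  rw [hS, Summable.tsum_eq_zero_add sS]
  have h0 : H 1 * c 0 = 1 := by norm_num [H, c]
  have hsplit : ∀ N : ℕ, H (N+1+1) * c (N+1)
      = H (N+1) * c (N+1) + a (N+1) * a (N+1) := by
    intro N
    rw [show H (N+1+1) = H (N+1) + 1/(((N+1:ℕ):ℝ)+1) from Finset.sum_range_succ _ (N+1)]
    rw [a_succ, c_succ]
    have hx : ((N:ℝ)+2) ≠ 0 := by positivity
    push_cast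
    field_simp
    ring
  rw [h0, tsum_congr hsplit, Summable.tsum_add sT3 sQ1]
  have hq : ∑' N, a (N+1) * a (N+1) = (∑' n, a n * a n) - 1 := by
    have h := Summable.sum_add_tsum_nat_add (f := fun n => a n * a n) 1 sQ
    have h1 : ∑ i ∈ Finset.range 1, a i * a i = 1 := by norm_num [a]
    rw [h1] at h
    have h2 : ∑' N, a (N+1) * a (N+1) = ∑' N, a (N+1+0) * a (N+1+0) := by norm_num
    linarith [h]
  rw [hq, T3_val, hz]
  ring
end

section
/- For real c with 3/4 < c < 5/4, the series ∑_{k=0}^∞ (3+4k)/((1+k)(1+2k)) · (c)_k (2−c)_k/((5/2−c)_k (1/2+c)_k) equals ∑_{k=0}^∞ 4/(1+2k) · (3/2−c)_k (c−1/2)_k/((1/2+c)_k (5/2−c)_k). -/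
open scoped BigOperators

lemma poch_zero (x : ℝ) : poch x 0 = 1 := by simp [poch]

lemma poch_succ (x : ℝ) (k : ℕ) : poch x (k+1) = poch x k * (x + k) := by
  simp [poch, ascPochhammer_succ_right]

lemma poch_pos {x : ℝ} (hx : 0 < x) (k : ℕ) : 0 < poch x k := by
  induction k with
  | zero => simp [poch_zero]
  | succ k ih =>
      rw [poch_succ]
      have : (0:ℝ) < x + k := by positivity
      positivity


set_option maxHeartbeats 2000000 in
lemma scalar (c x y w : ℝ) (hb1 : 1+y ≠ 0) (hb2 : 1+2*x+2*y ≠ 0) (hb3 : 3+2*x+2*y ≠ 0)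
    (hb4 : 1+2*x ≠ 0) (hD1 : 5/2-c+x+y ≠ 0) (hD2 : 1/2+c+x+y ≠ 0) :
    (3+2*(x+1)+4*y)/((1+y)*(1+2*(x+1)+2*y)) *
        (w * ((3/2-c+x)*(c-1/2+x)/((5/2-c+x+y)*(1/2+c+x+y))))
      - (3+2*x+4*y)/((1+y)*(1+2*x+2*y)) * w
    = 4*(1+2*x+(y+1))/((1+2*x)*(1+2*x+2*(y+1))) *
        (w * ((c+y)*(2-c+y)/((5/2-c+x+y)*(1/2+c+x+y))))
      - 4*(1+2*x+y)/((1+2*x)*(1+2*x+2*y)) * w := by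
  have h3a : 1+2*(x+1)+2*y = 3+2*x+2*y := by ring
  have h3b : 1+2*x+2*(y+1) = 3+2*x+2*y := by ring
  rw [h3a, h3b]
  set d1 : ℝ := 5/2-c+x+y with hd1
  set d2 : ℝ := 1/2+c+x+y with hd2
  have e1 : (3/2-c+x) = d1 - 1 - y := by rw [hd1]; ring
  have e2 : (c-1/2+x) = d2 - 1 - y := by rw [hd2]; ring
  have e3 : (c+y) = d2 - 1/2 - x := by rw [hd2]; ring
  have e4 : (2-c+y) = d1 - 1/2 - x := by rw [hd1]; ring
  rw [e1, e2, e3, e4]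
  field_simp
  ring

noncomputable def WW (c : ℝ) (n k : ℕ) : ℝ :=
  poch c k * poch (2-c) k * poch (3/2-c) n * poch (c-1/2) n /
    (poch (5/2-c) (n+k) * poch (1/2+c) (n+k))

noncomputable def FF (c : ℝ) (n k : ℕ) : ℝ :=
  (3 + 2*(n:ℝ) + 4*(k:ℝ)) / ((1+(k:ℝ)) * (1 + 2*(n:ℝ) + 2*(k:ℝ))) * WW c n k

noncomputable def GG (c : ℝ) (n k : ℕ) : ℝ :=
  4*(1 + 2*(n:ℝ) + (k:ℝ)) / ((1+2*(n:ℝ)) * (1 + 2*(n:ℝ) + 2*(k:ℝ))) * WW c n k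

section
variable {c : ℝ} (hc1 : 3/4 < c) (hc2 : c < 5/4)
include hc1 hc2


lemma WW_pos (n k : ℕ) : 0 < WW c n k := by
  have h1 : (0:ℝ) < c := by linarith
  have h2 : (0:ℝ) < 2 - c := by linarith
  have h3 : (0:ℝ) < 3/2 - c := by linarith
  have h4 : (0:ℝ) < c - 1/2 := by linarith
  have h5 : (0:ℝ) < 5/2 - c := by linarith
  have h6 : (0:ℝ) < 1/2 + c := by linarith
  unfold WW
  have := poch_pos h1 k
  have := poch_pos h2 k
  have := poch_pos h3 n
  have := poch_pos h4 n
  have := poch_pos h5 (n+k)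
  have := poch_pos h6 (n+k)
  positivity

lemma WW_succ_k (n k : ℕ) :
    WW c n (k+1) = WW c n k *
      ((c + k) * (2 - c + k) / ((5/2 - c + n + k) * (1/2 + c + n + k))) := by
  have h5 : (0:ℝ) < 5/2 - c := by linarith
  have h6 : (0:ℝ) < 1/2 + c := by linarith
  have e : n + (k+1) = (n+k) + 1 := rfl
  unfold WW
  rw [e, poch_succ, poch_succ, poch_succ, poch_succ]
  have hp5 := (poch_pos h5 (n+k)).ne'
  have hp6 := (poch_pos h6 (n+k)).ne'
  have hl5 : (5/2 - c + ((n:ℝ)+(k:ℝ))) ≠ 0 := by positivity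
  have hl6 : (1/2 + c + ((n:ℝ)+(k:ℝ))) ≠ 0 := by positivity
  push_cast
  field_simp
  ring

lemma WW_succ_n (n k : ℕ) :
    WW c (n+1) k = WW c n k *
      ((3/2 - c + n) * (c - 1/2 + n) / ((5/2 - c + n + k) * (1/2 + c + n + k))) := by
  have h5 : (0:ℝ) < 5/2 - c := by linarith
  have h6 : (0:ℝ) < 1/2 + c := by linarith
  have e : (n+1) + k = (n+k) + 1 := by omega
  unfold WW
  rw [e, poch_succ, poch_succ, poch_succ, poch_succ]
  have hp5 := (poch_pos h5 (n+k)).ne'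
  have hp6 := (poch_pos h6 (n+k)).ne'
  have hl5 : (5/2 - c + ((n:ℝ)+(k:ℝ))) ≠ 0 := by positivity
  have hl6 : (1/2 + c + ((n:ℝ)+(k:ℝ))) ≠ 0 := by positivity
  push_cast
  field_simp
  ring


set_option maxHeartbeats 1000000 in
lemma key (n k : ℕ) :
    FF c (n+1) k - FF c n k = GG c n (k+1) - GG c n k := by
  have e1 : (0:ℝ) < 5/2 - c + n + k := by
    have h1 := Nat.cast_nonneg (α := ℝ) n
    have h2 := Nat.cast_nonneg (α := ℝ) k
    linarith
  have e2 : (0:ℝ) < 1/2 + c + n + k := by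
    have h1 := Nat.cast_nonneg (α := ℝ) n
    have h2 := Nat.cast_nonneg (α := ℝ) k
    linarith
  have d1 : (1:ℝ) + (k:ℝ) ≠ 0 := by positivity
  have d2 : (1:ℝ) + 2*(n:ℝ) + 2*(k:ℝ) ≠ 0 := by positivity
  have d3 : (3:ℝ) + 2*(n:ℝ) + 2*(k:ℝ) ≠ 0 := by positivity
  have d4 : (1:ℝ) + 2*(n:ℝ) ≠ 0 := by positivity
  unfold FF GG
  rw [WW_succ_n hc1 hc2, WW_succ_k hc1 hc2]
  push_cast
  exact scalar c n k (WW c n k) d1 d2 d3 d4 (ne_of_gt e1) (ne_of_gt e2)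


lemma WW_n0_le (n : ℕ) : WW c n 0 ≤ 1/((n:ℝ)+1) := by
  induction n with
  | zero => unfold WW; simp [poch_zero]
  | succ n ih =>
      have hn := Nat.cast_nonneg (α := ℝ) n
      have hrw : WW c (n+1) 0 = WW c n 0 *
          ((3/2 - c + (n:ℝ)) * (c - 1/2 + (n:ℝ)) / ((5/2 - c + (n:ℝ)) * (1/2 + c + (n:ℝ)))) := by
        rw [WW_succ_n hc1 hc2 n 0]; norm_num
      rw [hrw]
      have hr : (3/2 - c + (n:ℝ)) * (c - 1/2 + (n:ℝ)) / ((5/2 - c + (n:ℝ)) * (1/2 + c + (n:ℝ)))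
          ≤ ((n:ℝ)+1)/((n:ℝ)+2) := by
        rw [div_le_div_iff₀ (by nlinarith) (by positivity)]
        nlinarith [mul_nonneg hn hn]
      have hrpos : (0:ℝ) ≤ (3/2 - c + (n:ℝ)) * (c - 1/2 + (n:ℝ)) / ((5/2 - c + (n:ℝ)) * (1/2 + c + (n:ℝ))) := by
        have h3 : (0:ℝ) ≤ 3/2 - c + n := by linarith
        have h4 : (0:ℝ) ≤ c - 1/2 + n := by linarith
        have h5 : (0:ℝ) < 5/2 - c + n := by linarith
        have h6 : (0:ℝ) < 1/2 + c + n := by linarith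
        positivity
      have step : WW c n 0 * ((3/2 - c + (n:ℝ)) * (c - 1/2 + (n:ℝ)) / ((5/2 - c + (n:ℝ)) * (1/2 + c + (n:ℝ))))
          ≤ (1/((n:ℝ)+1)) * (((n:ℝ)+1)/((n:ℝ)+2)) :=
        mul_le_mul ih hr hrpos (by positivity)
      have heq : (1/((n:ℝ)+1)) * (((n:ℝ)+1)/((n:ℝ)+2)) = 1/((n:ℝ)+2) := by
        have h : ((n:ℝ)+1) ≠ 0 := by positivity
        field_simp
      rw [heq] at step
      calc WW c n 0 * ((3/2 - c + (n:ℝ)) * (c - 1/2 + (n:ℝ)) / ((5/2 - c + (n:ℝ)) * (1/2 + c + (n:ℝ))))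
          ≤ 1/((n:ℝ)+2) := step
        _ = 1/(((n+1:ℕ):ℝ)+1) := by push_cast; ring

lemma WW_le (n k : ℕ) : WW c n k ≤ 1/(((n:ℝ)+1)*((k:ℝ)+1)) := by
  induction k with
  | zero =>
      simpa using WW_n0_le hc1 hc2 n
  | succ k ih =>
      have hn := Nat.cast_nonneg (α := ℝ) n
      have hk := Nat.cast_nonneg (α := ℝ) k
      rw [WW_succ_k hc1 hc2 n k]
      have hd5 : (0:ℝ) < 5/2 - c + (n:ℝ) + (k:ℝ) := by linarith
      have hd6 : (0:ℝ) < 1/2 + c + (n:ℝ) + (k:ℝ) := by linarith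
      have hr : (c + (k:ℝ)) * (2 - c + (k:ℝ)) / ((5/2 - c + (n:ℝ) + (k:ℝ)) * (1/2 + c + (n:ℝ) + (k:ℝ)))
          ≤ ((k:ℝ)+1)/((k:ℝ)+2) := by
        rw [div_le_div_iff₀ (by positivity) (by positivity)]
        nlinarith [sq_nonneg (c-1), mul_nonneg hn hk, mul_nonneg hn hn,
          mul_nonneg (mul_nonneg hn hn) hk, mul_nonneg (mul_nonneg hn hk) hk,
          mul_nonneg hk hk]
      have hrpos : (0:ℝ) ≤ (c + (k:ℝ)) * (2 - c + (k:ℝ)) / ((5/2 - c + (n:ℝ) + (k:ℝ)) * (1/2 + c + (n:ℝ) + (k:ℝ))) := by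
        have h1 : (0:ℝ) ≤ c + k := by linarith
        have h2 : (0:ℝ) ≤ 2 - c + k := by linarith
        positivity
      have step : WW c n k * ((c + (k:ℝ)) * (2 - c + (k:ℝ)) / ((5/2 - c + (n:ℝ) + (k:ℝ)) * (1/2 + c + (n:ℝ) + (k:ℝ))))
          ≤ (1/(((n:ℝ)+1)*((k:ℝ)+1))) * (((k:ℝ)+1)/((k:ℝ)+2)) :=
        mul_le_mul ih hr hrpos (by positivity)
      have heq : (1/(((n:ℝ)+1)*((k:ℝ)+1))) * (((k:ℝ)+1)/((k:ℝ)+2)) = 1/(((n:ℝ)+1)*((k:ℝ)+2)) := by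
        have h1 : ((n:ℝ)+1) ≠ 0 := by positivity
        have h2 : ((k:ℝ)+1) ≠ 0 := by positivity
        field_simp
      rw [heq] at step
      calc WW c n k * ((c + (k:ℝ)) * (2 - c + (k:ℝ)) / ((5/2 - c + (n:ℝ) + (k:ℝ)) * (1/2 + c + (n:ℝ) + (k:ℝ))))
          ≤ 1/(((n:ℝ)+1)*((k:ℝ)+2)) := step
        _ = 1/(((n:ℝ)+1)*(((k+1:ℕ):ℝ)+1)) := by push_cast; ring

lemma FF_nonneg (n k : ℕ) : 0 ≤ FF c n k := by
  unfold FF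
  have hw := (WW_pos hc1 hc2 n k).le
  have hn := Nat.cast_nonneg (α := ℝ) n
  have hk := Nat.cast_nonneg (α := ℝ) k
  have h1 : (0:ℝ) ≤ (3 + 2*(n:ℝ) + 4*(k:ℝ)) / ((1+(k:ℝ)) * (1 + 2*(n:ℝ) + 2*(k:ℝ))) := by positivity
  exact mul_nonneg h1 hw

lemma GG_nonneg (n k : ℕ) : 0 ≤ GG c n k := by
  unfold GG
  have hw := (WW_pos hc1 hc2 n k).le
  have hn := Nat.cast_nonneg (α := ℝ) n
  have hk := Nat.cast_nonneg (α := ℝ) k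
  have h1 : (0:ℝ) ≤ 4*(1 + 2*(n:ℝ) + (k:ℝ)) / ((1+2*(n:ℝ)) * (1 + 2*(n:ℝ) + 2*(k:ℝ))) := by positivity
  exact mul_nonneg h1 hw

lemma FF_le (n k : ℕ) : FF c n k ≤ (3/((n:ℝ)+1)) * (1/((k:ℝ)+1)^2) := by
  have hn := Nat.cast_nonneg (α := ℝ) n
  have hk := Nat.cast_nonneg (α := ℝ) k
  have hw := WW_pos hc1 hc2 n k
  have hwle := WW_le hc1 hc2 n k
  have hcoef : (3 + 2*(n:ℝ) + 4*(k:ℝ)) / ((1+(k:ℝ)) * (1 + 2*(n:ℝ) + 2*(k:ℝ))) ≤ 3/((k:ℝ)+1) := by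
    rw [div_le_div_iff₀ (by positivity) (by positivity)]
    nlinarith [mul_nonneg hn hk, mul_nonneg hk hk]
  have hcoef0 : (0:ℝ) ≤ (3 + 2*(n:ℝ) + 4*(k:ℝ)) / ((1+(k:ℝ)) * (1 + 2*(n:ℝ) + 2*(k:ℝ))) := by positivity
  have step : FF c n k ≤ (3/((k:ℝ)+1)) * (1/(((n:ℝ)+1)*((k:ℝ)+1))) := by
    unfold FF
    exact mul_le_mul hcoef hwle hw.le (by positivity)
  calc FF c n k ≤ (3/((k:ℝ)+1)) * (1/(((n:ℝ)+1)*((k:ℝ)+1))) := step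
    _ = (3/((n:ℝ)+1)) * (1/((k:ℝ)+1)^2) := by
        have h1 : ((n:ℝ)+1) ≠ 0 := by positivity
        have h2 : ((k:ℝ)+1) ≠ 0 := by positivity
        field_simp

lemma GG_le (n k : ℕ) : GG c n k ≤ (4/((n:ℝ)+1)) * (1/((k:ℝ)+1)) := by
  have hn := Nat.cast_nonneg (α := ℝ) n
  have hk := Nat.cast_nonneg (α := ℝ) k
  have hw := WW_pos hc1 hc2 n k
  have hwle := WW_le hc1 hc2 n k
  have hcoef : 4*(1 + 2*(n:ℝ) + (k:ℝ)) / ((1+2*(n:ℝ)) * (1 + 2*(n:ℝ) + 2*(k:ℝ))) ≤ 4 := by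
    rw [div_le_iff₀ (by positivity)]
    nlinarith [mul_nonneg hn hn, mul_nonneg hn hk]
  have hcoef0 : (0:ℝ) ≤ 4*(1 + 2*(n:ℝ) + (k:ℝ)) / ((1+2*(n:ℝ)) * (1 + 2*(n:ℝ) + 2*(k:ℝ))) := by positivity
  have step : GG c n k ≤ 4 * (1/(((n:ℝ)+1)*((k:ℝ)+1))) := by
    unfold GG
    exact mul_le_mul hcoef hwle hw.le (by norm_num)
  calc GG c n k ≤ 4 * (1/(((n:ℝ)+1)*((k:ℝ)+1))) := step
    _ = (4/((n:ℝ)+1)) * (1/((k:ℝ)+1)) := by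
        have h1 : ((n:ℝ)+1) ≠ 0 := by positivity
        have h2 : ((k:ℝ)+1) ≠ 0 := by positivity
        field_simp

lemma bb_le (n : ℕ) : GG c n 0 ≤ 4 * (1/((n:ℝ)+1)^2) := by
  have hn := Nat.cast_nonneg (α := ℝ) n
  have hw := WW_pos hc1 hc2 n 0
  have hwle := WW_n0_le hc1 hc2 n
  have hcoef : 4*(1 + 2*(n:ℝ) + ((0:ℕ):ℝ)) / ((1+2*(n:ℝ)) * (1 + 2*(n:ℝ) + 2*((0:ℕ):ℝ))) ≤ 4/((n:ℝ)+1) := by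
    norm_num
    rw [div_le_div_iff₀ (by positivity) (by positivity)]
    nlinarith [mul_nonneg hn hn]
  have hcoef0 : (0:ℝ) ≤ 4*(1 + 2*(n:ℝ) + ((0:ℕ):ℝ)) / ((1+2*(n:ℝ)) * (1 + 2*(n:ℝ) + 2*((0:ℕ):ℝ))) := by positivity
  have step : GG c n 0 ≤ (4/((n:ℝ)+1)) * (1/((n:ℝ)+1)) := by
    unfold GG
    exact mul_le_mul hcoef hwle hw.le (by positivity)
  calc GG c n 0 ≤ (4/((n:ℝ)+1)) * (1/((n:ℝ)+1)) := step
    _ = 4 * (1/((n:ℝ)+1)^2) := by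
        have h1 : ((n:ℝ)+1) ≠ 0 := by positivity
        field_simp


omit hc1 hc2 in
lemma summable_sq : Summable (fun k : ℕ => (1:ℝ)/((k:ℝ)+1)^2) := by
  have h0 : Summable (fun n : ℕ => (1:ℝ)/(n:ℝ)^2) :=
    Real.summable_one_div_nat_pow.mpr one_lt_two
  have h1 := (summable_nat_add_iff 1).mpr h0
  refine h1.congr fun k => ?_
  push_cast
  ring

lemma summable_FF (n : ℕ) : Summable (fun k => FF c n k) := by
  refine Summable.of_nonneg_of_le (fun k => FF_nonneg hc1 hc2 n k)
    (fun k => FF_le hc1 hc2 n k) ?_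
  exact summable_sq.mul_left _

lemma tendsto_GG (n : ℕ) :
    Filter.Tendsto (fun k => GG c n k) Filter.atTop (nhds 0) := by
  refine squeeze_zero (fun k => GG_nonneg hc1 hc2 n k) (fun k => GG_le hc1 hc2 n k) ?_
  have h : Filter.Tendsto (fun n : ℕ => 1 / ((n : ℝ) + 1)) Filter.atTop (nhds 0) := tendsto_one_div_add_atTop_nhds_zero_nat
  have := h.const_mul (4/((n:ℝ)+1))
  simpa using this

lemma hasSum_diff (n : ℕ) :
    HasSum (fun k => FF c n k - FF c (n+1) k) (GG c n 0) := by
  have hsum : Summable (fun k => FF c n k - FF c (n+1) k) :=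
    (summable_FF hc1 hc2 n).sub (summable_FF hc1 hc2 (n+1))
  rw [hsum.hasSum_iff_tendsto_nat]
  have hps : ∀ K : ℕ, ∑ k ∈ Finset.range K, (FF c n k - FF c (n+1) k)
      = GG c n 0 - GG c n K := by
    intro K
    have hterm : ∀ k, FF c n k - FF c (n+1) k = GG c n k - GG c n (k+1) := by
      intro k
      have := key hc1 hc2 n k
      linarith
    calc ∑ k ∈ Finset.range K, (FF c n k - FF c (n+1) k)
        = ∑ k ∈ Finset.range K, (GG c n k - GG c n (k+1)) :=
          Finset.sum_congr rfl (fun k _ => hterm k)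
      _ = GG c n 0 - GG c n K := Finset.sum_range_sub' (fun k => GG c n k) K
  simp only [hps]
  simpa using tendsto_const_nhds.sub (tendsto_GG hc1 hc2 n)

lemma summable_bb : Summable (fun n => GG c n 0) := by
  refine Summable.of_nonneg_of_le (fun n => GG_nonneg hc1 hc2 n 0)
    (fun n => bb_le hc1 hc2 n) ?_
  exact summable_sq.mul_left _

lemma S_diff (n : ℕ) :
    (∑' k, FF c n k) - (∑' k, FF c (n+1) k) = GG c n 0 := by
  have h1 : HasSum (fun k => FF c n k - FF c (n+1) k)
      ((∑' k, FF c n k) - (∑' k, FF c (n+1) k)) :=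
    (summable_FF hc1 hc2 n).hasSum.sub (summable_FF hc1 hc2 (n+1)).hasSum
  exact h1.unique (hasSum_diff hc1 hc2 n)

lemma S_nonneg (n : ℕ) : 0 ≤ ∑' k, FF c n k :=
  tsum_nonneg (fun k => FF_nonneg hc1 hc2 n k)

lemma S_le (n : ℕ) :
    (∑' k, FF c n k) ≤ (3 * ∑' k : ℕ, (1:ℝ)/((k:ℝ)+1)^2) * (1/((n:ℝ)+1)) := by
  have h1 : (∑' k, FF c n k) ≤ ∑' k : ℕ, (3/((n:ℝ)+1)) * ((1:ℝ)/((k:ℝ)+1)^2) :=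
    Summable.tsum_le_tsum (fun k => FF_le hc1 hc2 n k) (summable_FF hc1 hc2 n)
      (summable_sq.mul_left _)
  rw [tsum_mul_left] at h1
  calc (∑' k, FF c n k) ≤ (3/((n:ℝ)+1)) * ∑' k : ℕ, (1:ℝ)/((k:ℝ)+1)^2 := h1
    _ = (3 * ∑' k : ℕ, (1:ℝ)/((k:ℝ)+1)^2) * (1/((n:ℝ)+1)) := by ring

lemma S_tendsto : Filter.Tendsto (fun n => ∑' k, FF c n k) Filter.atTop (nhds 0) := by
  refine squeeze_zero (fun n => S_nonneg hc1 hc2 n) (fun n => S_le hc1 hc2 n) ?_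
  have h : Filter.Tendsto (fun n : ℕ => 1 / ((n : ℝ) + 1)) Filter.atTop (nhds 0) := tendsto_one_div_add_atTop_nhds_zero_nat
  have := h.const_mul (3 * ∑' k : ℕ, (1:ℝ)/((k:ℝ)+1)^2)
  simpa using this

lemma hasSum_bb : HasSum (fun n => GG c n 0) (∑' k, FF c 0 k) := by
  rw [(summable_bb hc1 hc2).hasSum_iff_tendsto_nat]
  have hps : ∀ N : ℕ, ∑ n ∈ Finset.range N, GG c n 0
      = (∑' k, FF c 0 k) - (∑' k, FF c N k) := by
    intro N
    calc ∑ n ∈ Finset.range N, GG c n 0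
        = ∑ n ∈ Finset.range N, ((∑' k, FF c n k) - (∑' k, FF c (n+1) k)) :=
          Finset.sum_congr rfl (fun n _ => (S_diff hc1 hc2 n).symm)
      _ = (∑' k, FF c 0 k) - (∑' k, FF c N k) :=
          Finset.sum_range_sub' (fun n => ∑' k, FF c n k) N
  simp only [hps]
  simpa using tendsto_const_nhds.sub (S_tendsto hc1 hc2)

end

theorem stmt15 (c : ℝ) (hc1 : 3/4 < c) (hc2 : c < 5/4) :
    ∑' k : ℕ, (3 + 4 * (k : ℝ)) / ((1 + (k : ℝ)) * (1 + 2 * (k : ℝ))) *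
      (poch c k * poch (2 - c) k / (poch (5/2 - c) k * poch (1/2 + c) k))
      = ∑' k : ℕ, 4 / (1 + 2 * (k : ℝ)) *
          (poch (3/2 - c) k * poch (c - 1/2) k /
            (poch (1/2 + c) k * poch (5/2 - c) k)) := by
  have hLHS : (∑' k : ℕ, (3 + 4 * (k : ℝ)) / ((1 + (k : ℝ)) * (1 + 2 * (k : ℝ))) *
      (poch c k * poch (2 - c) k / (poch (5/2 - c) k * poch (1/2 + c) k)))
      = ∑' k, FF c 0 k := by
    refine tsum_congr fun k => ?_
    unfold FF WW
    simp only [Nat.zero_add, Nat.cast_zero, poch_zero]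
    ring
  have hRHS : (∑' k : ℕ, 4 / (1 + 2 * (k : ℝ)) *
      (poch (3/2 - c) k * poch (c - 1/2) k /
        (poch (1/2 + c) k * poch (5/2 - c) k)))
      = ∑' n, GG c n 0 := by
    refine tsum_congr fun n => ?_
    unfold GG WW
    simp only [Nat.add_zero, Nat.cast_zero, poch_zero, mul_one, one_mul, mul_zero, add_zero]
    have h1 : (1 + 2*(n:ℝ)) ≠ 0 := by positivity
    have hcoef : 4*(1+2*(n:ℝ))/((1+2*(n:ℝ))*(1+2*(n:ℝ))) = 4/(1+2*(n:ℝ)) := by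
      rw [mul_comm (4:ℝ) (1+2*(n:ℝ)), mul_div_mul_left _ _ h1]
    rw [hcoef, mul_comm (poch (1/2+c) n) (poch (5/2-c) n)]
  rw [hLHS, hRHS]
  exact (hasSum_bb hc1 hc2).tsum_eq.symm
end
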